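/- Let Σ be a finite bipartite graph with bipartition E ∪ O, and let C_3 denote the set of proper 3-colorings of Σ with colors {0,1,2}. Fix E' ⊆ E and O' ⊆ O, and let x ∈ E \ E' be such that some proper 3-coloring is 0 on E' and 1 on O'. Among proper 3-colorings χ with χ ≡ 0 on E' and χ ≡ 1 on O', the number with χ(x) = 1 is at most the number with χ(x) = 0. -/
import Mathlib

section Aux

variable {V : Type*}

/-- step relation: adjacent vertices, both colored 0 or 1 (≠ 2). -/
def cstep (G : SimpleGraph V) (χ : V → Fin 3) (a b : V) : Prop :=
  G.Adj a b ∧ χ a ≠ 2 ∧ χ b ≠ 2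

/-- reachability from x through 0/1-colored vertices. -/
def creach (G : SimpleGraph V) (χ : V → Fin 3) (x v : V) : Prop :=
  Relation.ReflTransGen (cstep G χ) x v

open Classical in
/-- swap colors 0 and 1 on the reachable set. -/
noncomputable def cswap (G : SimpleGraph V) (χ : V → Fin 3) (x : V) : V → Fin 3 :=
  fun v => if creach G χ x v then Equiv.swap 0 1 (χ v) else χ v

lemma swap_ne_two_iff (c : Fin 3) : Equiv.swap (0 : Fin 3) 1 c ≠ 2 ↔ c ≠ 2 := by
  revert c; decide

lemma cswap_ne_two_iff (G : SimpleGraph V) (χ : V → Fin 3) (x v : V) :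
    cswap G χ x v ≠ 2 ↔ χ v ≠ 2 := by
  classical
  unfold cswap
  split
  · exact swap_ne_two_iff _
  · rfl

lemma cstep_cswap (G : SimpleGraph V) (χ : V → Fin 3) (x : V) :
    cstep G (cswap G χ x) = cstep G χ := by
  funext a b
  simp only [cstep, cswap_ne_two_iff]

lemma creach_cswap (G : SimpleGraph V) (χ : V → Fin 3) (x : V) :
    creach G (cswap G χ x) x = creach G χ x := by
  unfold creach
  rw [cstep_cswap]

lemma cswap_involutive (G : SimpleGraph V) (χ : V → Fin 3) (x : V) :
    cswap G (cswap G χ x) x = χ := by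
  classical
  funext v
  by_cases h : creach G χ x v
  · simp [cswap, creach_cswap, h, Equiv.swap_apply_self]
  · simp [cswap, creach_cswap, h]

lemma creach_ne_two (G : SimpleGraph V) (χ : V → Fin 3) (x v : V)
    (hx : χ x ≠ 2) (h : creach G χ x v) : χ v ≠ 2 := by
  induction h with
  | refl => exact hx
  | tail _ hstep _ => exact hstep.2.2

end Aux

/-- Let `Σ` be a finite bipartite graph with bipartition `EV ∪ OV`, and
consider proper 3-colorings with colors `{0,1,2}` (here `Fin 3`). Fix
`E' ⊆ EV`, `O' ⊆ OV`, and `x ∈ EV \ E'`, and assume some proper 3-coloring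
is `0` on `E'` and `1` on `O'`. Among proper 3-colorings `χ` with `χ ≡ 0` on
`E'` and `χ ≡ 1` on `O'`, the number with `χ x = 1` is at most the number
with `χ x = 0`. -/
theorem colorings_one_le_colorings_zero {V : Type*} [Fintype V]
    (G : SimpleGraph V) (EV OV : Set V) (hdisj : Disjoint EV OV)
    (hcover : EV ∪ OV = Set.univ)
    (hbip : ∀ u v, G.Adj u v → (u ∈ EV ∧ v ∈ OV) ∨ (u ∈ OV ∧ v ∈ EV))
    (E' : Set V) (hE' : E' ⊆ EV) (O' : Set V) (hO' : O' ⊆ OV)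
    (x : V) (hx : x ∈ EV \ E')
    (hne : ∃ χ : V → Fin 3, (∀ u v, G.Adj u v → χ u ≠ χ v) ∧
      (∀ v ∈ E', χ v = 0) ∧ (∀ v ∈ O', χ v = 1)) :
    Nat.card {χ : V → Fin 3 // (∀ u v, G.Adj u v → χ u ≠ χ v) ∧
        (∀ v ∈ E', χ v = 0) ∧ (∀ v ∈ O', χ v = 1) ∧ χ x = 1} ≤
      Nat.card {χ : V → Fin 3 // (∀ u v, G.Adj u v → χ u ≠ χ v) ∧
        (∀ v ∈ E', χ v = 0) ∧ (∀ v ∈ O', χ v = 1) ∧ χ x = 0} := by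
  classical
  -- key facts about the reachable set when χ x = 1
  have key : ∀ χ : V → Fin 3, (∀ u v, G.Adj u v → χ u ≠ χ v) → χ x = 1 →
      ∀ v, creach G χ x v → (v ∈ EV → χ v = 1) ∧ (v ∈ OV → χ v = 0) := by
    intro χ hprop hx1 v hv
    induction hv with
    | refl =>
      refine ⟨fun _ => hx1, fun hO => ?_⟩
      exact absurd (hdisj.ne_of_mem hx.1 hO rfl) (fun h => h)
    | @tail b c hab hstep ih =>
      obtain ⟨hadj, hb2, hc2⟩ := hstep
      have hne' : χ c ≠ χ b := fun h => hprop b c hadj h.symm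
      rcases hbip b c hadj with ⟨hbE, hcO⟩ | ⟨hbO, hcE⟩
      · have hb1 : χ b = 1 := (ih).1 hbE
        have hc0 : χ c = 0 := by
          have h1 := hne'; rw [hb1] at h1
          have hfin : ∀ d : Fin 3, d ≠ 1 → d ≠ 2 → d = 0 := by decide
          exact hfin _ h1 hc2
        exact ⟨fun hcE => absurd (hdisj.ne_of_mem hcE hcO rfl) (fun h => h),
          fun _ => hc0⟩
      · have hb0 : χ b = 0 := (ih).2 hbO
        have hc1 : χ c = 1 := by
          have h0 := hne'; rw [hb0] at h0
          have hfin : ∀ d : Fin 3, d ≠ 0 → d ≠ 2 → d = 1 := by decide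
          exact hfin _ h0 hc2
        exact ⟨fun _ => hc1,
          fun hcO => absurd (hdisj.ne_of_mem hcE hcO rfl) (fun h => h)⟩
  -- the injection
  have step : ∀ χ : V → Fin 3,
      ((∀ u v, G.Adj u v → χ u ≠ χ v) ∧
        (∀ v ∈ E', χ v = 0) ∧ (∀ v ∈ O', χ v = 1) ∧ χ x = 1) →
      ((∀ u v, G.Adj u v → cswap G χ x u ≠ cswap G χ x v) ∧
        (∀ v ∈ E', cswap G χ x v = 0) ∧ (∀ v ∈ O', cswap G χ x v = 1) ∧
        cswap G χ x x = 0) := by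
    intro χ ⟨hprop, hE'0, hO'1, hx1⟩
    have hx2 : χ x ≠ 2 := by rw [hx1]; decide
    have notreachE' : ∀ v ∈ E', ¬ creach G χ x v := by
      intro v hv hr
      have h1 := (key χ hprop hx1 v hr).1 (hE' hv)
      rw [hE'0 v hv] at h1; exact absurd h1 (by decide)
    have notreachO' : ∀ v ∈ O', ¬ creach G χ x v := by
      intro v hv hr
      have h0 := (key χ hprop hx1 v hr).2 (hO' hv)
      rw [hO'1 v hv] at h0; exact absurd h0 (by decide)
    refine ⟨?_, ?_, ?_, ?_⟩
    · intro u v hadj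
      by_cases hu : creach G χ x u <;> by_cases hv : creach G χ x v
      · simp only [cswap, hu, hv, if_pos]
        exact fun h => hprop u v hadj (Equiv.injective _ h)
      · -- u reachable, v not: χ v = 2
        have hu2 : χ u ≠ 2 := creach_ne_two G χ x u hx2 hu
        have hv2 : χ v = 2 := by
          by_contra hv2
          exact hv (hu.tail ⟨hadj, hu2, hv2⟩)
        simp only [cswap, hu, hv, if_pos, if_neg, if_true, if_false]
        rw [hv2]
        exact (swap_ne_two_iff _).2 hu2
      · have hv2 : χ v ≠ 2 := creach_ne_two G χ x v hx2 hv
        have hu2 : χ u = 2 := by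
          by_contra hu2
          exact hu (hv.tail ⟨hadj.symm, hv2, hu2⟩)
        simp only [cswap, hu, hv, if_neg, if_pos, if_true, if_false]
        rw [hu2]
        exact fun h => (swap_ne_two_iff _).2 hv2 h.symm
      · simp only [cswap, hu, hv, if_neg, if_false]
        exact hprop u v hadj
    · intro v hv
      simp only [cswap, notreachE' v hv, if_false, if_neg (notreachE' v hv)]
      exact hE'0 v hv
    · intro v hv
      simp only [cswap, if_neg (notreachO' v hv)]
      exact hO'1 v hv
    · have : creach G χ x x := Relation.ReflTransGen.refl
      simp only [cswap, if_pos this, hx1]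
      decide
  refine Nat.card_le_card_of_injective
    (fun p => ⟨cswap G p.1 x, step p.1 p.2⟩) ?_
  intro p q h
  have h' : cswap G p.1 x = cswap G q.1 x := congrArg Subtype.val h
  have : p.1 = q.1 := by
    rw [← cswap_involutive G p.1 x, ← cswap_involutive G q.1 x, h']
  exact Subtype.ext this
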